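/- Let n = 2t+1 be an odd positive integer and f a Boolean function of n variables with AI(f) = t+1. Then f is balanced, i.e., wt(f) = 2^{n−1}. -/

import Mathlib

/-- Hamming weight of a point of `F_2^n`. -/
def wtB {n : ℕ} (X : Fin n → ZMod 2) : ℕ :=
  (Finset.univ.filter (fun i => X i = 1)).card

/-- Coefficient of the monomial `∏_{i ∈ S} x_i` in the algebraic normal form of `f`. -/
def anfCoeff {n : ℕ} (f : (Fin n → ZMod 2) → ZMod 2) (S : Finset (Fin n)) : ZMod 2 :=
  ∑ x ∈ Finset.univ.filter (fun x : Fin n → ZMod 2 => ∀ i, x i = 1 → i ∈ S), f x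

/-- Algebraic degree of a Boolean function (degree of its ANF). -/
def degB {n : ℕ} (f : (Fin n → ZMod 2) → ZMod 2) : ℕ :=
  (Finset.univ.filter (fun S : Finset (Fin n) => anfCoeff f S ≠ 0)).sup Finset.card

/-- `g` is an annihilator of `f` : `g` is nonzero and `f · g = 0`. -/
def IsAnnihilator {n : ℕ} (f g : (Fin n → ZMod 2) → ZMod 2) : Prop :=
  g ≠ 0 ∧ ∀ x, f x * g x = 0

/-- Algebraic immunity: minimal degree of an annihilator of `f` or of `f ⊕ 1`. -/
noncomputable def AI {n : ℕ} (f : (Fin n → ZMod 2) → ZMod 2) : ℕ :=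
  sInf {d | ∃ g, (IsAnnihilator f g ∨ IsAnnihilator (fun x => f x + 1) g) ∧ degB g = d}

/-- Matrix whose rows (indexed by the set `T`) are the evaluation vectors `v(X)`, `X ∈ T`,
of all monomials of degree at most `D`. -/
def VSet {n : ℕ} (D : ℕ) (T : Set (Fin n → ZMod 2)) :
    Matrix T {S : Finset (Fin n) // S.card ≤ D} (ZMod 2) :=
  fun x S => ∏ i ∈ S.1, (x : Fin n → ZMod 2) i

/-- Matrix whose rows (listed according to the enumeration `Y`) are the evaluation vectors
`v(Y r)` of all monomials of degree at most `D`. -/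
def VEnum {n : ℕ} (D : ℕ) {N : ℕ} (Y : Fin N → (Fin n → ZMod 2)) :
    Matrix (Fin N) {S : Finset (Fin n) // S.card ≤ D} (ZMod 2) :=
  fun r S => ∏ i ∈ S.1, Y r i

/-
If `wt(f) < 2^(n-1)`, which for `n = 2t+1` is the number `∑_{k ≤ t} C(n,k)` of monomials of degree
at most `t`, then the linear map sending an algebraic normal form of degree `≤ t` to its values on
the support of `f` has a nontrivial kernel. By uniqueness of the ANF, a nonzero kernel element is a
nonzero annihilator of `f` of degree `≤ t < AI(f)`, which is impossible. The same argument for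
`f ⊕ 1` gives `2^n - wt(f) ≥ 2^(n-1)`.
-/

open Finset Matrix

lemma ZMod.two_eq_zero_or_eq_one (a : ZMod 2) : a = 0 ∨ a = 1 := by
  revert a; decide

theorem anfCoeff_sum {n : ℕ} {ι : Type*} (s : Finset ι) (g : ι → (Fin n → ZMod 2) → ZMod 2)
    (S : Finset (Fin n)) :
    anfCoeff (fun x => ∑ j ∈ s, g j x) S = ∑ j ∈ s, anfCoeff (g j) S :=
  sum_comm

theorem anfCoeff_mul_const {n : ℕ} (g : (Fin n → ZMod 2) → ZMod 2) (a : ZMod 2)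
    (S : Finset (Fin n)) :
    anfCoeff (fun x => g x * a) S = anfCoeff g S * a :=
  (sum_mul ..).symm

-- The support of the summation is a box, so the sum of products factors coordinatewise.
theorem anfCoeff_monomial {n : ℕ} (T S : Finset (Fin n)) :
    anfCoeff (fun x => ∏ i ∈ T, x i) S = if S = T then 1 else 0 := by
  have hsupp : univ.filter (fun x : Fin n → ZMod 2 => ∀ i, x i = 1 → i ∈ S) =
      Fintype.piFinset (fun i => if i ∈ S then univ else {0}) := by
    ext x
    simp only [mem_filter, mem_univ, true_and, Fintype.mem_piFinset]
    refine forall_congr' fun i => ?_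
    by_cases hi : i ∈ S <;>
      simp only [hi, if_true, if_false, mem_univ, mem_singleton, imp_true_iff]
    generalize x i = a
    revert a; decide
  have hfactor : ∀ i, ∑ a ∈ (if i ∈ S then univ else {0} : Finset (ZMod 2)),
      (if i ∈ T then a else 1) = if (i ∈ S ↔ i ∈ T) then 1 else 0 := fun i => by
    by_cases hS : i ∈ S <;> by_cases hT : i ∈ T <;> simp [hS, hT] <;> decide
  unfold anfCoeff
  rw [hsupp, sum_congr rfl fun x _ => (prod_ite_mem_eq T x).symm,
    ← prod_univ_sum _ fun i a => if i ∈ T then a else 1]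
  simp_rw [hfactor, Fintype.prod_boole, ← Finset.ext_iff]

def ofANF {n : ℕ} (D : ℕ) (c : {S : Finset (Fin n) // S.card ≤ D} → ZMod 2) :
    (Fin n → ZMod 2) → ZMod 2 :=
  fun x => ∑ S, (∏ i ∈ S.1, x i) * c S

section ofANF

variable {n D : ℕ} (c : {S : Finset (Fin n) // S.card ≤ D} → ZMod 2)

theorem anfCoeff_ofANF (S : Finset (Fin n)) :
    anfCoeff (ofANF D c) S = if h : S.card ≤ D then c ⟨S, h⟩ else 0 := by
  unfold ofANF
  rw [anfCoeff_sum univ fun S x => (∏ i ∈ S.1, x i) * c S]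
  simp only [anfCoeff_mul_const, anfCoeff_monomial, ite_mul, one_mul, zero_mul]
  split_ifs with h
  · rw [Fintype.sum_eq_single ⟨S, h⟩ fun T hT => if_neg fun hST => hT (Subtype.ext hST.symm),
      if_pos rfl]
  · exact sum_eq_zero fun T _ => if_neg fun (hST : S = T.1) => h (hST ▸ T.2)

theorem degB_ofANF_le : degB (ofANF D c) ≤ D := by
  refine Finset.sup_le fun S hS => ?_
  by_contra h
  simp [anfCoeff_ofANF, h] at hS

theorem ofANF_ne_zero (hc : c ≠ 0) : ofANF D c ≠ 0 := by
  refine fun h0 => hc (funext fun S => ?_)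
  simpa [anfCoeff, h0, S.2, eq_comm] using anfCoeff_ofANF c S.1

theorem VSet_mulVec_apply (T : Set (Fin n → ZMod 2)) (x : T) :
    (VSet D T *ᵥ c) x = ofANF D c x :=
  rfl

end ofANF

theorem exists_isAnnihilator_degB_le_of_card_lt {n : ℕ} (f : (Fin n → ZMod 2) → ZMod 2)
    (D : ℕ) (h : Nat.card {x // f x = 1} < Nat.card {S : Finset (Fin n) // S.card ≤ D}) :
    ∃ g, IsAnnihilator f g ∧ degB g ≤ D := by
  have hker : LinearMap.ker (VSet D {x | f x = 1}).mulVecLin ≠ ⊥ :=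
    LinearMap.ker_ne_bot_of_finrank_lt <| by
      simp only [Module.finrank_fintype_fun_eq_card, ← Nat.card_eq_fintype_card]
      exact h
  obtain ⟨c, hc, hc0⟩ := (Submodule.ne_bot_iff _).mp hker
  refine ⟨ofANF D c, ⟨ofANF_ne_zero c hc0, fun x => ?_⟩, degB_ofANF_le c⟩
  rcases ZMod.two_eq_zero_or_eq_one (f x) with hx | hx
  · rw [hx, zero_mul]
  · rw [← VSet_mulVec_apply c _ (⟨x, hx⟩ : {x | f x = 1}), ← mulVecLin_apply,
      LinearMap.mem_ker.mp hc, Pi.zero_apply, mul_zero]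

theorem card_finset_card_le (n D : ℕ) :
    Nat.card {S : Finset (Fin n) // S.card ≤ D} = ∑ k ∈ range (D + 1), n.choose k := by
  rw [Nat.card_eq_fintype_card, Fintype.card_subtype,
    card_eq_sum_card_fiberwise (f := card) (t := range (D + 1)) fun S hS => by
      simpa [Nat.lt_succ_iff] using hS]
  refine sum_congr rfl fun k hk => ?_
  have hk : k ≤ D := Nat.lt_succ_iff.mp (mem_range.mp hk)
  have hchoose : #(powersetCard k (univ : Finset (Fin n))) = n.choose k := by simp
  rw [← hchoose, filter_filter]
  refine congrArg card (ext fun S => ?_)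
  simp only [mem_filter, mem_univ, true_and, mem_powersetCard_univ]
  omega

theorem card_finset_card_le_half (t : ℕ) :
    Nat.card {S : Finset (Fin (2 * t + 1)) // S.card ≤ t} = 2 ^ (2 * t) := by
  rw [card_finset_card_le, Nat.sum_range_choose_halfway, pow_mul]
  norm_num

theorem AI_le_degB {n : ℕ} {f g : (Fin n → ZMod 2) → ZMod 2}
    (hg : IsAnnihilator f g ∨ IsAnnihilator (fun x => f x + 1) g) : AI f ≤ degB g :=
  Nat.sInf_le ⟨g, hg, rfl⟩

theorem card_le_weight_of_lt_AI {n D : ℕ} {f : (Fin n → ZMod 2) → ZMod 2} (hD : D < AI f) :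
    Nat.card {S : Finset (Fin n) // S.card ≤ D} ≤ Nat.card {x // f x = 1} ∧
      Nat.card {S : Finset (Fin n) // S.card ≤ D} ≤ Nat.card {x // f x + 1 = 1} := by
  constructor <;> refine le_of_not_gt fun h => ?_
  · obtain ⟨g, hg, hdeg⟩ := exists_isAnnihilator_degB_le_of_card_lt f D h
    exact absurd (AI_le_degB (Or.inl hg)) (by omega)
  · obtain ⟨g, hg, hdeg⟩ := exists_isAnnihilator_degB_le_of_card_lt _ D h
    exact absurd (AI_le_degB (Or.inr hg)) (by omega)

theorem weight_add_weight_add_one {n : ℕ} (f : (Fin n → ZMod 2) → ZMod 2) :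
    Nat.card {x // f x = 1} + Nat.card {x // f x + 1 = 1} = 2 ^ n := by
  have hcompl : ∀ x, f x + 1 = 1 ↔ ¬f x = 1 := fun x => by
    rcases ZMod.two_eq_zero_or_eq_one (f x) with hx | hx <;> simp [hx]
  simp only [hcompl, Nat.card_eq_fintype_card, Fintype.card_subtype_compl]
  have := Fintype.card_subtype_le fun x => f x = 1
  simp only [Fintype.card_fun, Fintype.card_fin, ZMod.card] at this ⊢
  omega

/-- for odd `n = 2t+1`, a Boolean function with maximum algebraic immunity
`t+1` is balanced. -/
theorem stmt_13 (n t : ℕ) (hn : n = 2 * t + 1) (f : (Fin n → ZMod 2) → ZMod 2)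
    (hf : AI f = t + 1) :
    Nat.card {x : Fin n → ZMod 2 // f x = 1} = 2 ^ (n - 1) := by
  subst hn
  obtain ⟨hweight, hweight_compl⟩ := card_le_weight_of_lt_AI (D := t) (f := f) (by omega)
  have htotal := weight_add_weight_add_one f
  rw [card_finset_card_le_half] at hweight hweight_compl
  rw [pow_succ] at htotal
  rw [Nat.add_sub_cancel]
  omega
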